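/- arXiv:1401.5255 — 3 statements merged into one kernel-verified Lean document; each statement's English description precedes it below -/
import Mathlib

section
/- Let H be an n×n complex matrix with Hᴴ invertible, and let η be an invertible Hermitian n×n complex matrix satisfying η H η⁻¹ = Hᴴ. Then for every natural number k, the matrix η_k = (Hᴴ)^k η is Hermitian. -/
theorem stmt_2 {n : ℕ} (H η : Matrix (Fin n) (Fin n) ℂ)
    (hH_inv : IsUnit H.conjTranspose.det)
    (hη_inv : IsUnit η.det) (hη_herm : η.IsHermitian)
    (h : η * H * η⁻¹ = H.conjTranspose) :
    ∀ k : ℕ, (H.conjTranspose ^ k * η).IsHermitian := by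
  have key : η * H = H.conjTranspose * η := by
    have := congrArg (· * η) h
    simpa [Matrix.mul_assoc, Matrix.nonsing_inv_mul η hη_inv] using this
  have comm : ∀ k : ℕ, η * H ^ k = H.conjTranspose ^ k * η := by
    intro k
    induction k with
    | zero => simp
    | succ k ih =>
      rw [pow_succ, pow_succ, ← Matrix.mul_assoc, ih, Matrix.mul_assoc, key,
        ← Matrix.mul_assoc]
  intro k
  unfold Matrix.IsHermitian
  rw [Matrix.conjTranspose_mul, Matrix.conjTranspose_pow, Matrix.conjTranspose_conjTranspose,
    hη_herm.eq, comm]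
end

section
/- Let H be an n×n complex matrix with Hᴴ invertible, and let η be an invertible Hermitian n×n complex matrix satisfying η H η⁻¹ = Hᴴ. Then for every natural number k, the matrix η_k = (Hᴴ)^k η is invertible and satisfies η_k H η_k⁻¹ = Hᴴ. -/
theorem stmt_3 {n : ℕ} (H η : Matrix (Fin n) (Fin n) ℂ)
    (hH_inv : IsUnit H.conjTranspose.det)
    (hη_inv : IsUnit η.det) (hη_herm : η.IsHermitian)
    (h : η * H * η⁻¹ = H.conjTranspose) :
    ∀ k : ℕ, IsUnit (H.conjTranspose ^ k * η).det ∧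
      (H.conjTranspose ^ k * η) * H * (H.conjTranspose ^ k * η)⁻¹ = H.conjTranspose := by
  have hcomm : η * H = H.conjTranspose * η := by
    have := congrArg (· * η) h
    simpa [Matrix.mul_assoc, Matrix.nonsing_inv_mul η hη_inv] using this
  intro k
  have hdet : IsUnit (H.conjTranspose ^ k * η).det := by
    rw [Matrix.det_mul, Matrix.det_pow]
    exact (hH_inv.pow k).mul hη_inv
  refine ⟨hdet, ?_⟩
  have hcomm2 : (H.conjTranspose ^ k * η) * H = H.conjTranspose * (H.conjTranspose ^ k * η) := by
    rw [Matrix.mul_assoc, hcomm, ← Matrix.mul_assoc, ← Matrix.mul_assoc, ← pow_succ, ← pow_succ']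
  rw [hcomm2, Matrix.mul_assoc, Matrix.mul_nonsing_inv _ hdet, Matrix.mul_one]
end

section
/- Let H be an n×n complex matrix whose conjugate transpose Hᴴ is invertible, and let η be an invertible Hermitian n×n complex matrix satisfying η H η⁻¹ = Hᴴ. Suppose η_m is an invertible Hermitian n×n matrix with η_m H η_m⁻¹ = Hᴴ. Then η_{m+1} = Hᴴ η_m is also an invertible Hermitian matrix with η_{m+1} H η_{m+1}⁻¹ = Hᴴ. -/
theorem stmt_17 {n : ℕ} (H η ηm : Matrix (Fin n) (Fin n) ℂ)
    (hH_inv : IsUnit H.conjTranspose.det)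
    (hη_inv : IsUnit η.det) (hη_herm : η.IsHermitian)
    (h : η * H * η⁻¹ = H.conjTranspose)
    (hηm_inv : IsUnit ηm.det) (hηm_herm : ηm.IsHermitian)
    (hm : ηm * H * ηm⁻¹ = H.conjTranspose) :
    IsUnit (H.conjTranspose * ηm).det ∧ (H.conjTranspose * ηm).IsHermitian ∧
      (H.conjTranspose * ηm) * H * (H.conjTranspose * ηm)⁻¹ = H.conjTranspose := by
  have hcomm : ηm * H = H.conjTranspose * ηm := by
    have := congrArg (· * ηm) hm
    simpa [Matrix.mul_assoc, Matrix.nonsing_inv_mul ηm hηm_inv] using this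
  have hdet : IsUnit (H.conjTranspose * ηm).det := by
    rw [Matrix.det_mul]; exact hH_inv.mul hηm_inv
  refine ⟨hdet, ?_, ?_⟩
  · show (H.conjTranspose * ηm).conjTranspose = _
    rw [Matrix.conjTranspose_mul, hηm_herm.eq, Matrix.conjTranspose_conjTranspose, hcomm]
  · rw [Matrix.mul_inv_rev, ← Matrix.mul_assoc, Matrix.mul_assoc _ ηm H, hcomm,
      ← Matrix.mul_assoc, Matrix.mul_assoc _ ηm ηm⁻¹,
      Matrix.mul_nonsing_inv ηm hηm_inv, Matrix.mul_one,
      Matrix.mul_assoc, Matrix.mul_nonsing_inv _ hH_inv, Matrix.mul_one]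
end
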